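/- arXiv:1901.09507 — 5 statements merged into one kernel-verified Lean document; each statement's English description precedes it below -/
import Mathlib

section
/- Fix T ∈ ℕ, η ∈ (0,1], P > 0, an initial state e₀, and for each t ∈ {1,…,T} a monotone increasing function φₜ : ℝ → ℝ. Define pₜ(x) = clamp(φₜ(-x/η),0,P) - clamp(-φₜ(-xη),0,P) and the simulated state σₜ(x) = σₜ₋₁(x) - max(pₜ(x),0)/η - min(pₜ(x),0)·η with σ₀(x) = e₀. Then for each t, σₜ is a monotone (nondecreasing) function of x. -/
theorem stmt3 (T : ℕ) (η P e₀ : ℝ) (hη : η ∈ Set.Ioc (0:ℝ) 1) (hP : 0 < P)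
    (φ : ℕ → ℝ → ℝ) (hφ : ∀ t, Monotone (φ t))
    (p σ : ℕ → ℝ → ℝ)
    (hp : ∀ t x, p t x = max 0 (min (φ t (-x / η)) P) - max 0 (min (-φ t (-x * η)) P))
    (hσ0 : ∀ x, σ 0 x = e₀)
    (hσ : ∀ t x, σ (t + 1) x = σ t x - max (p (t + 1) x) 0 / η - min (p (t + 1) x) 0 * η) :
    ∀ t, t ≤ T → Monotone (σ t) := by
  have hη0 : (0:ℝ) < η := hη.1
  intro t _
  induction t with
  | zero => intro x y _; simp [hσ0]
  | succ n ih =>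
    intro x y hxy
    rw [hσ, hσ]
    have h1 : φ (n+1) (-y / η) ≤ φ (n+1) (-x / η) :=
      hφ _ (by gcongr <;> linarith)
    have h2 : -φ (n+1) (-x * η) ≤ -φ (n+1) (-y * η) :=
      neg_le_neg (hφ _ (mul_le_mul_of_nonneg_right (neg_le_neg hxy) hη0.le))
    have hpmono : p (n+1) y ≤ p (n+1) x := by
      rw [hp, hp]
      exact sub_le_sub (max_le_max le_rfl (min_le_min h1 le_rfl))
        (max_le_max le_rfl (min_le_min h2 le_rfl))
    have A : max (p (n+1) y) 0 ≤ max (p (n+1) x) 0 := max_le_max hpmono le_rfl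
    have B : min (p (n+1) y) 0 ≤ min (p (n+1) x) 0 := min_le_min hpmono le_rfl
    have A' : max (p (n+1) y) 0 / η ≤ max (p (n+1) x) 0 / η :=
      by gcongr
    have B' : min (p (n+1) y) 0 * η ≤ min (p (n+1) x) 0 * η :=
      mul_le_mul_of_nonneg_right B hη0.le
    have := ih (Nat.le_of_succ_le ‹n + 1 ≤ T›) hxy
    linarith
end

section
/- Let O : ℝ → ℝ be convex and differentiable with strictly increasing surjective derivative o, η ∈ (0,1], P > 0, θ ∈ ℝ. Then p⁻ = clamp(-φ(-θη),0,P), where φ = o⁻¹, is the unique minimizer of q ↦ O(-q) - θ·η·q over q ∈ [0,P]. -/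
/-!
The objective `g q = O (-q) - θ η q` has derivative `G q = -o (-q) - θ η`, which is strictly
increasing, so `g` is strictly convex, and `G` vanishes at `-φ (-θ η)`. Clamping this zero to
`[0, P]` gives a point `x` with `0 ≤ G x * (q - x)` for all `q ∈ [0, P]` (the first-order
optimality condition on an interval), and strict convexity makes `x` the unique minimizer.
-/

open Set

lemma StrictConvexOn.lt_of_hasDerivAt_of_nonneg_mul_sub {S : Set ℝ} {g : ℝ → ℝ} {g' a b : ℝ}
    (hg : StrictConvexOn ℝ S g) (ha : a ∈ S) (hb : b ∈ S) (hd : HasDerivAt g g' a)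
    (hne : b ≠ a) (hsign : 0 ≤ g' * (b - a)) : g a < g b := by
  rcases hne.lt_or_gt with hba | hab
  · have hslope : slope g b a < g' := hg.slope_lt_of_hasDerivAt hb ha hba hd
    have hg' : g' ≤ 0 := nonpos_of_mul_nonneg_left hsign (sub_neg.2 hba)
    rw [slope_def_field, div_lt_iff₀ (sub_pos.2 hba)] at hslope
    nlinarith
  · have hslope : g' < slope g a b := hg.lt_slope_of_hasDerivAt ha hb hab hd
    have hg' : 0 ≤ g' := nonneg_of_mul_nonneg_left hsign (sub_pos.2 hab)
    rw [slope_def_field, lt_div_iff₀ (sub_pos.2 hab)] at hslope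
    nlinarith

lemma max_min_mem_Icc {lo hi : ℝ} (h : lo ≤ hi) (z : ℝ) : max lo (min z hi) ∈ Icc lo hi :=
  ⟨le_max_left _ _, max_le h (min_le_right _ _)⟩

lemma Monotone.nonneg_mul_sub_max_min {G : ℝ → ℝ} (hG : Monotone G) {z lo hi q : ℝ}
    (hz : G z = 0) (hq : q ∈ Icc lo hi) :
    0 ≤ G (max lo (min z hi)) * (q - max lo (min z hi)) := by
  rcases le_total z lo with hzlo | hloz
  · have hclamp : max lo (min z hi) = lo := max_eq_left ((min_le_left _ _).trans hzlo)
    rw [hclamp]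
    exact mul_nonneg (hz ▸ hG hzlo) (sub_nonneg.2 hq.1)
  rcases le_total hi z with hhiz | hzhi
  · have hclamp : max lo (min z hi) = hi := by
      rw [min_eq_right hhiz, max_eq_right (hq.1.trans hq.2)]
    rw [hclamp]
    exact mul_nonneg_of_nonpos_of_nonpos (hz ▸ hG hhiz) (sub_nonpos.2 hq.2)
  · rw [min_eq_left hzhi, max_eq_right hloz, hz, zero_mul]

lemma hasDerivAt_comp_neg_sub_mul {O : ℝ → ℝ} {x : ℝ} (hO : DifferentiableAt ℝ O (-x)) (c : ℝ) :
    HasDerivAt (fun q => O (-q) - c * q) (-deriv O (-x) - c) x := by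
  rw [show -deriv O (-x) - c = deriv O (-x) * -1 - c * 1 by ring]
  exact (hO.hasDerivAt.comp x (hasDerivAt_neg x)).sub ((hasDerivAt_id x).const_mul c)

theorem stmt5_general (O : ℝ → ℝ) (η P θ : ℝ) (φ : ℝ → ℝ)
    (hdiff : Differentiable ℝ O)
    (ho : StrictMono (deriv O))
    (hφ : ∀ y, deriv O (φ y) = y)
    (hP : 0 < P) :
    (max 0 (min (-φ (-θ * η)) P)) ∈ Set.Icc (0:ℝ) P ∧
    ∀ q ∈ Set.Icc (0:ℝ) P, q ≠ max 0 (min (-φ (-θ * η)) P) →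
      O (-(max 0 (min (-φ (-θ * η)) P))) - θ * η * max 0 (min (-φ (-θ * η)) P)
        < O (-q) - θ * η * q := by
  set G : ℝ → ℝ := fun x => -deriv O (-x) - θ * η
  have hG : StrictMono G := fun x y hxy => sub_lt_sub_right (neg_lt_neg (ho (neg_lt_neg hxy))) _
  have hG_zero : G (-φ (-θ * η)) = 0 := by simp only [G, neg_neg, hφ]; ring
  have hderiv : ∀ x, HasDerivAt (fun q => O (-q) - θ * η * q) (G x) x :=
    fun x => hasDerivAt_comp_neg_sub_mul (hdiff _) _
  have hconvex : StrictConvexOn ℝ univ (fun q => O (-q) - θ * η * q) := by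
    refine StrictMono.strictConvexOn_univ_of_deriv (continuous_iff_continuousAt.2 fun x =>
      (hderiv x).continuousAt) ?_
    rwa [show deriv (fun q => O (-q) - θ * η * q) = G from funext fun x => (hderiv x).deriv]
  refine ⟨max_min_mem_Icc hP.le _, fun q hq hne => ?_⟩
  exact hconvex.lt_of_hasDerivAt_of_nonneg_mul_sub (mem_univ _) (mem_univ _) (hderiv _) hne
    (hG.monotone.nonneg_mul_sub_max_min hG_zero hq)

theorem stmt5 (O : ℝ → ℝ) (η P θ : ℝ) (φ : ℝ → ℝ)
    (hO : ConvexOn ℝ Set.univ O) (hdiff : Differentiable ℝ O)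
    (ho : StrictMono (deriv O)) (hsurj : Function.Surjective (deriv O))
    (hφ : ∀ y, deriv O (φ y) = y)
    (hη : η ∈ Set.Ioc (0:ℝ) 1) (hP : 0 < P) :
    (max 0 (min (-φ (-θ * η)) P)) ∈ Set.Icc (0:ℝ) P ∧
    ∀ q ∈ Set.Icc (0:ℝ) P, q ≠ max 0 (min (-φ (-θ * η)) P) →
      O (-(max 0 (min (-φ (-θ * η)) P))) - θ * η * max 0 (min (-φ (-θ * η)) P)
        < O (-q) - θ * η * q :=
  stmt5_general O η P θ φ hdiff ho hφ hP
end

section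
/- Let η ∈ (0,1], θ ≥ 0, and φ : ℝ → ℝ monotone increasing. Then it is impossible that both clamp(φ(-θ/η),0,P) > 0 and clamp(-φ(-θη),0,P) > 0, i.e., the policy never simultaneously charges and discharges when the Lagrangian multiplier θ is nonnegative. -/
theorem lt_of_lt_max_min {α : Type*} [LinearOrder α] {a y b : α} (h : a < max a (min y b)) :
    a < y := by
  rw [lt_max_iff, lt_min_iff] at h
  exact h.resolve_left (lt_irrefl a) |>.1

theorem neg_div_le_neg_mul {K : Type*} [Field K] [LinearOrder K] [IsStrictOrderedRing K]
    {θ η : K} (hθ : 0 ≤ θ) (hη₀ : 0 < η) (hη₁ : η ≤ 1) : -θ / η ≤ -θ * η := by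
  rw [neg_div, neg_mul, neg_le_neg_iff]
  calc θ * η ≤ θ := mul_le_of_le_one_right hθ hη₁
    _ ≤ θ / η := le_div_self hθ hη₀ hη₁

theorem stmt6_general (η P θ : ℝ) (φ : ℝ → ℝ) (hη : η ∈ Set.Ioc (0:ℝ) 1)
    (hθ : 0 ≤ θ) (hφ : Monotone φ) :
    ¬(0 < max 0 (min (φ (-θ / η)) P) ∧ 0 < max 0 (min (-φ (-θ * η)) P)) := by
  rintro ⟨hdischarge, hcharge⟩
  have hφ_le : φ (-θ / η) ≤ φ (-θ * η) := hφ (neg_div_le_neg_mul hθ hη.1 hη.2)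
  linarith [lt_of_lt_max_min hdischarge, lt_of_lt_max_min hcharge]

theorem stmt6 (η P θ : ℝ) (φ : ℝ → ℝ) (hη : η ∈ Set.Ioc (0:ℝ) 1) (hP : 0 < P)
    (hθ : 0 ≤ θ) (hφ : Monotone φ) :
    ¬(0 < max 0 (min (φ (-θ / η)) P) ∧ 0 < max 0 (min (-φ (-θ * η)) P)) :=
  stmt6_general η P θ φ hη hθ hφ
end

section
/- Let E > 0, e₀ ∈ [0, E], η ∈ (0,1], P > 0. For each t let p⁺ₜ(x), p⁻ₜ(x) ∈ [0,P] be the policy components with p⁺ₜ antitone and p⁻ₜ monotone in x. Define σₜ^{π⁻}(x) using the charge-preferring policy (discharge zeroed when charge active) and σₜ^{π}(x) using the unmodified policy pₜ = p⁺ₜ - p⁻ₜ, both via σₜ = σₜ₋₁ - max(pₜ,0)/η - min(pₜ,0)η, σ₀ = e₀. Then σₜ^{π⁻}(x) ≥ σₜ^{π}(x) for all t and x. -/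
theorem stmt16 (E e₀ η P : ℝ) (hE : 0 < E) (he : e₀ ∈ Set.Icc 0 E)
    (hη : η ∈ Set.Ioc (0:ℝ) 1) (hP : 0 < P)
    (pd pc : ℕ → ℝ → ℝ)
    (hmem : ∀ t x, pd t x ∈ Set.Icc 0 P ∧ pc t x ∈ Set.Icc 0 P)
    (hd : ∀ t, Antitone (pd t)) (hc : ∀ t, Monotone (pc t))
    (σπ σm : ℕ → ℝ → ℝ)
    (hσπ0 : ∀ x, σπ 0 x = e₀) (hσm0 : ∀ x, σm 0 x = e₀)
    (hσπ : ∀ t x, σπ (t + 1) x = σπ t x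
      - max (pd (t + 1) x - pc (t + 1) x) 0 / η - min (pd (t + 1) x - pc (t + 1) x) 0 * η)
    (hσm : ∀ t x, σm (t + 1) x = σm t x
      - max ((if pc (t + 1) x = 0 then pd (t + 1) x else 0) - pc (t + 1) x) 0 / η
      - min ((if pc (t + 1) x = 0 then pd (t + 1) x else 0) - pc (t + 1) x) 0 * η) :
    ∀ t x, σπ t x ≤ σm t x := by
  have hη0 : 0 < η := hη.1
  intro t
  induction t with
  | zero => intro x; rw [hσπ0, hσm0]
  | succ t ih =>
    intro x
    rw [hσπ, hσm]
    have hple : (if pc (t + 1) x = 0 then pd (t + 1) x else 0) - pc (t + 1) x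
        ≤ pd (t + 1) x - pc (t + 1) x := by
      have hd0 : 0 ≤ pd (t + 1) x := (hmem (t+1) x).1.1
      split <;> linarith
    have h1 : max ((if pc (t + 1) x = 0 then pd (t + 1) x else 0) - pc (t + 1) x) 0 / η
        ≤ max (pd (t + 1) x - pc (t + 1) x) 0 / η := by
      gcongr <;> first | exact hple | rfl
    have h2 : min ((if pc (t + 1) x = 0 then pd (t + 1) x else 0) - pc (t + 1) x) 0 * η
        ≤ min (pd (t + 1) x - pc (t + 1) x) 0 * η := by
      apply mul_le_mul_of_nonneg_right (min_le_min hple le_rfl) hη0.le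
    have := ih x
    linarith
end

section
/- Fix η ∈ (0,1], P > 0, E > 0, e₀ ∈ [0,E], T ∈ ℕ, monotone increasing functions φₜ, and continuous nondecreasing c_T. Define σₜ(x) via the policy recursion. Define f(x) = -1 if σ_τ(x) > E at the first bound-crossing time τ, f(x) = +1 if σ_τ(x) < 0 at the first bound-crossing time, and f(x) = sign(-c_T(σ_T(x)) - x) if no crossing occurs. Then, if σ crosses the upper bound E first under guess x, then under any x' ≥ x it also crosses the upper bound E first or satisfies x' ≥ -c_T(σ_T(x')). -/
theorem stmt19 (T : ℕ) (η P E e₀ : ℝ) (hη : η ∈ Set.Ioc (0:ℝ) 1) (hP : 0 < P)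
    (hE : 0 < E) (he : e₀ ∈ Set.Icc 0 E)
    (φ : ℕ → ℝ → ℝ) (hφ : ∀ t, Monotone (φ t))
    (cT : ℝ → ℝ) (hc : Monotone cT) (hcont : Continuous cT)
    (p σ : ℕ → ℝ → ℝ)
    (hp : ∀ t x, p t x = max 0 (min (φ t (-x / η)) P) - max 0 (min (-φ t (-x * η)) P))
    (hσ0 : ∀ x, σ 0 x = e₀)
    (hσ : ∀ t x, σ (t + 1) x = σ t x - max (p (t + 1) x) 0 / η - min (p (t + 1) x) 0 * η) :
    ∀ x x', x ≤ x' →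
      (∃ τ ∈ Finset.Icc 1 T, E < σ τ x ∧ ∀ γ, 1 ≤ γ → γ < τ → 0 ≤ σ γ x ∧ σ γ x ≤ E) →
      ((∃ τ ∈ Finset.Icc 1 T, E < σ τ x' ∧ ∀ γ, 1 ≤ γ → γ < τ → 0 ≤ σ γ x' ∧ σ γ x' ≤ E) ∨
        -cT (σ T x') ≤ x') := by
  obtain ⟨hη0, hη1⟩ := hη
  intro x x' hxx' ⟨τ, hτmem, hτE, hτbd⟩
  -- p is antitone in x
  have hpmono : ∀ t, p t x' ≤ p t x := by
    intro t
    rw [hp, hp]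
    have h1 : φ t (-x' / η) ≤ φ t (-x / η) := by
      apply hφ; exact (div_le_div_iff_of_pos_right hη0).mpr (by linarith)
    have h2 : φ t (-x' * η) ≤ φ t (-x * η) := by
      apply hφ; nlinarith
    have hA : (0 ⊔ φ t (-x' / η) ⊓ P) ≤ 0 ⊔ φ t (-x / η) ⊓ P :=
      max_le_max le_rfl (min_le_min h1 le_rfl)
    have hB : (0 ⊔ -φ t (-x * η) ⊓ P) ≤ 0 ⊔ -φ t (-x' * η) ⊓ P :=
      max_le_max le_rfl (min_le_min (by linarith) le_rfl)
    linarith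
  -- σ is monotone in x
  have hσmono : ∀ t, σ t x ≤ σ t x' := by
    intro t
    induction t with
    | zero => rw [hσ0, hσ0]
    | succ n ih =>
      rw [hσ, hσ]
      have hp' := hpmono (n + 1)
      have h1 : max (p (n+1) x') 0 ≤ max (p (n+1) x) 0 := by
        exact max_le_max hp' le_rfl
      have h2 : min (p (n+1) x') 0 ≤ min (p (n+1) x) 0 := by
        exact min_le_min hp' le_rfl
      have h3 : max (p (n+1) x') 0 / η ≤ max (p (n+1) x) 0 / η :=
        (div_le_div_iff_of_pos_right hη0).mpr h1
      have h4 : min (p (n+1) x') 0 * η ≤ min (p (n+1) x) 0 * η := by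
        exact mul_le_mul_of_nonneg_right h2 hη0.le
      linarith
  left
  simp only [Finset.mem_Icc] at hτmem
  -- take the least time ≤ τ where σ · x' exceeds E
  have hex : ∃ n, 1 ≤ n ∧ E < σ n x' := ⟨τ, hτmem.1, lt_of_lt_of_le hτE (hσmono τ)⟩
  classical
  set τ' := Nat.find hex with hτ'def
  have hspec := Nat.find_spec hex
  have hτ'le : τ' ≤ τ := Nat.find_min' hex ⟨hτmem.1, lt_of_lt_of_le hτE (hσmono τ)⟩
  refine ⟨τ', Finset.mem_Icc.mpr ⟨hspec.1, hτ'le.trans hτmem.2⟩, hspec.2, ?_⟩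
  intro γ hγ1 hγτ'
  have hγτ : γ < τ := lt_of_lt_of_le hγτ' hτ'le
  have hbd := hτbd γ hγ1 hγτ
  constructor
  · exact le_trans hbd.1 (hσmono γ)
  · have := Nat.find_min hex hγτ'
    push_neg at this
    exact this hγ1
end
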